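/- Let f₁ : U → ℝ be smooth and define A^i_j := g^{ik}(∂²f₁/∂u^k∂u^j − Γ^m_{kj} ∂f₁/∂u^m) on U. Let V be a smooth (1,1)-tensor on U with g V^T = V g, A V = V A, and Γ^i_{jl} V^l_k = Γ^i_{kl} V^l_j on U, and let p, q ∈ ℝ be such that Q := qI − pV is invertible at every point of U, with W := Q^{-1}. Then (∂²f₁/∂u^i∂u^k) W^k_j = (∂²f₁/∂u^j∂u^k) W^k_i on U for all indices i, j. -/

import Mathlib

open scoped BigOperators
open Matrix

/-- Partial derivative `∂f/∂xⁱ` at `x`. -/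
noncomputable def pd {n : ℕ} (f : (Fin n → ℝ) → ℝ) (i : Fin n) (x : Fin n → ℝ) : ℝ :=
  fderiv ℝ f x (Pi.single i 1)

/-- Christoffel symbols `Γ^k_{ij}` of the metric with contravariant components `gU`
(the `g^{ij}`) and covariant components `gL` (the `g_{ij}`):
`Γ^k_{ij} = (1/2) g^{ks}(∂_i g_{sj} + ∂_j g_{si} − ∂_s g_{ij})`. -/
noncomputable def christoffel {n : ℕ}
    (gU gL : (Fin n → ℝ) → Matrix (Fin n) (Fin n) ℝ)
    (k i j : Fin n) (x : Fin n → ℝ) : ℝ :=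
  (1 / 2) * ∑ s, gU x k s *
    (pd (fun y => gL y s j) i x + pd (fun y => gL y s i) j x - pd (fun y => gL y i j) s x)

/-- Curvature tensor `R_{ijk}{}^s = ∂_i Γ^s_{jk} − ∂_j Γ^s_{ik} + Γ^s_{im}Γ^m_{jk} − Γ^s_{jm}Γ^m_{ik}`. -/
noncomputable def curvature {n : ℕ}
    (gU gL : (Fin n → ℝ) → Matrix (Fin n) (Fin n) ℝ)
    (i j k s : Fin n) (x : Fin n → ℝ) : ℝ :=
  pd (christoffel gU gL s j k) i x - pd (christoffel gU gL s i k) j x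
    + ∑ m, christoffel gU gL s i m x * christoffel gU gL m j k x
    - ∑ m, christoffel gU gL s j m x * christoffel gU gL m i k x

/-- Covariant derivative `∇_k V^i_j = ∂_k V^i_j + Γ^i_{km} V^m_j − Γ^m_{kj} V^i_m`
of a (1,1)-tensor `V`. -/
noncomputable def covDer {n : ℕ}
    (gU gL V : (Fin n → ℝ) → Matrix (Fin n) (Fin n) ℝ)
    (k i j : Fin n) (x : Fin n → ℝ) : ℝ :=
  pd (fun y => V y i j) k x + ∑ m, christoffel gU gL i k m x * V x m j
    - ∑ m, christoffel gU gL m k j x * V x i m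

/-- Raised partial derivative `∂^i := η^{is} ∂_{u^s}`. -/
noncomputable def pdUp {n : ℕ} (η : Matrix (Fin n) (Fin n) ℝ)
    (f : (Fin n → ℝ) → ℝ) (i : Fin n) (x : Fin n → ℝ) : ℝ :=
  ∑ s, η i s * pd f s x

theorem stmt_14
    (n : ℕ) (hn : 1 ≤ n)
    (U : Set (Fin n → ℝ)) (hU_open : IsOpen U) (hU_conn : IsConnected U)
    (hU_sc : SimplyConnectedSpace U)
    (g gL : (Fin n → ℝ) → Matrix (Fin n) (Fin n) ℝ)
    (hg_smooth : ∀ i j, ContDiffOn ℝ (⊤ : ℕ∞) (fun x => g x i j) U)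
    (hgL_smooth : ∀ i j, ContDiffOn ℝ (⊤ : ℕ∞) (fun x => gL x i j) U)
    (hg_symm : ∀ x ∈ U, (g x).IsSymm)
    (hg_inv : ∀ x ∈ U, g x * gL x = 1)
    (f1 : (Fin n → ℝ) → ℝ) (hf1 : ContDiffOn ℝ (⊤ : ℕ∞) f1 U)
    (A : (Fin n → ℝ) → Matrix (Fin n) (Fin n) ℝ)
    (hAf : ∀ x ∈ U, ∀ i j, A x i j =
      ∑ k, g x i k * (pd (pd f1 j) k x - ∑ m, christoffel g gL m k j x * pd f1 m x))
    (V : (Fin n → ℝ) → Matrix (Fin n) (Fin n) ℝ)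
    (hV_smooth : ∀ i j, ContDiffOn ℝ (⊤ : ℕ∞) (fun x => V x i j) U)
    (hgV : ∀ x ∈ U, g x * (V x)ᵀ = V x * g x)
    (hAV : ∀ x ∈ U, A x * V x = V x * A x)
    (hGamV : ∀ x ∈ U, ∀ i j k,
      ∑ l, christoffel g gL i j l x * V x l k = ∑ l, christoffel g gL i k l x * V x l j)
    (p q : ℝ)
    (Q W : (Fin n → ℝ) → Matrix (Fin n) (Fin n) ℝ)
    (hQ : ∀ x ∈ U, Q x = q • (1 : Matrix (Fin n) (Fin n) ℝ) - p • V x)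
    (hQW : ∀ x ∈ U, Q x * W x = 1 ∧ W x * Q x = 1)
    :
    ∀ x ∈ U, ∀ i j,
      ∑ k, pd (pd f1 k) i x * W x k j = ∑ k, pd (pd f1 k) j x * W x k i := by

  intro x hx i j
  classical
  have hxU : U ∈ nhds x := hU_open.mem_nhds hx
  -- gL is symmetric on U
  have hgl : gL x * g x = 1 := mul_eq_one_comm.mp (hg_inv x hx)
  have hgL_symm : ∀ y ∈ U, (gL y)ᵀ = gL y := by
    intro y hy
    have h1 := hg_inv y hy
    have hgs : (g y)ᵀ = g y := hg_symm y hy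
    calc (gL y)ᵀ = (gL y)ᵀ * (g y * gL y) := by rw [h1, mul_one]
      _ = ((gL y)ᵀ * (g y)ᵀ) * gL y := by rw [hgs, mul_assoc]
      _ = (g y * gL y)ᵀ * gL y := by rw [Matrix.transpose_mul]
      _ = gL y := by rw [h1, Matrix.transpose_one, one_mul]
  have hpd_gL : ∀ a b s : Fin n, pd (fun y => gL y a b) s x = pd (fun y => gL y b a) s x := by
    intro a b s
    unfold pd
    have hev : (fun y => gL y a b) =ᶠ[nhds x] (fun y => gL y b a) := by
      filter_upwards [hxU] with y hy
      have h := hgL_symm y hy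
      calc gL y a b = (gL y)ᵀ b a := rfl
        _ = gL y b a := by rw [h]
    rw [hev.fderiv_eq]
  have hGamma_symm : ∀ m a b : Fin n,
      christoffel g gL m a b x = christoffel g gL m b a x := by
    intro m a b
    unfold christoffel
    congr 1
    apply Finset.sum_congr rfl
    intro s _
    rw [hpd_gL a b s]
    ring
  -- Schwarz symmetry of the Hessian
  have hf1x : ContDiffAt ℝ (⊤ : ℕ∞) f1 x := hf1.contDiffAt hxU
  have hdf : DifferentiableAt ℝ (fderiv ℝ f1) x := by
    have h1 : ContDiffAt ℝ 1 (fderiv ℝ f1) x := hf1x.fderiv_right (by exact WithTop.coe_le_coe.mpr (le_top (a := 1 + 1)))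
    exact h1.differentiableAt one_ne_zero
  have hsym : IsSymmSndFDerivAt ℝ f1 x := hf1x.isSymmSndFDerivAt (by rw [minSmoothness_of_isRCLikeNormedField]; exact WithTop.coe_le_coe.mpr (le_top (a := 2)))
  have hpd2 : ∀ a b : Fin n,
      pd (pd f1 b) a x = fderiv ℝ (fderiv ℝ f1) x (Pi.single a 1) (Pi.single b 1) := by
    intro a b
    show fderiv ℝ (fun y => (fderiv ℝ f1 y) ((fun _ : Fin n → ℝ => (Pi.single b (1:ℝ) : Fin n → ℝ)) y)) x (Pi.single a 1) = _
    rw [fderiv_clm_apply hdf (differentiableAt_const _)]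
    simp
  have hschwarz : ∀ a b : Fin n, pd (pd f1 b) a x = pd (pd f1 a) b x := by
    intro a b
    rw [hpd2, hpd2, hsym.eq]
  -- Matrices at x
  set H : Matrix (Fin n) (Fin n) ℝ := Matrix.of (fun a b => pd (pd f1 b) a x) with hHdef
  set G : Matrix (Fin n) (Fin n) ℝ :=
    Matrix.of (fun a b => ∑ m, christoffel g gL m a b x * pd f1 m x) with hGdef
  have hHsym : Hᵀ = H := by
    ext a b
    exact hschwarz b a
  have hGsym : Gᵀ = G := by
    ext a b
    simp only [hGdef, Matrix.transpose_apply, Matrix.of_apply]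
    exact Finset.sum_congr rfl fun m _ => by rw [hGamma_symm m b a]
  have hA : A x = g x * (H - G) := by
    ext a b
    rw [hAf x hx a b, Matrix.mul_apply]
    apply Finset.sum_congr rfl
    intro k _
    simp only [hHdef, hGdef, Matrix.sub_apply, Matrix.of_apply]
  have hHc : H - G = gL x * A x := by
    rw [hA, ← mul_assoc, hgl, one_mul]
  have hVgL : (V x)ᵀ * gL x = gL x * V x := by
    have h := hgV x hx
    calc (V x)ᵀ * gL x = (gL x * g x) * (V x)ᵀ * gL x := by rw [hgl, one_mul]
      _ = gL x * (g x * (V x)ᵀ) * gL x := by rw [mul_assoc (gL x)]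
      _ = gL x * (V x * g x) * gL x := by rw [h]
      _ = gL x * V x * (g x * gL x) := by rw [mul_assoc (gL x), mul_assoc (V x), ← mul_assoc (gL x)]
      _ = gL x * V x := by rw [hg_inv x hx, mul_one]
  have hHcV : (H - G) * V x = (V x)ᵀ * (H - G) := by
    calc (H - G) * V x = gL x * (A x * V x) := by rw [hHc, mul_assoc]
      _ = gL x * (V x * A x) := by rw [hAV x hx]
      _ = (gL x * V x) * A x := by rw [mul_assoc]
      _ = ((V x)ᵀ * gL x) * A x := by rw [hVgL]
      _ = (V x)ᵀ * (H - G) := by rw [mul_assoc, ← hHc]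
  have hGVsym : (G * V x)ᵀ = G * V x := by
    ext a b
    simp only [Matrix.transpose_apply, Matrix.mul_apply, hGdef, Matrix.of_apply,
      Finset.sum_mul]
    rw [Finset.sum_comm]
    conv_rhs => rw [Finset.sum_comm]
    apply Finset.sum_congr rfl
    intro m _
    have h := hGamV x hx m b a
    calc ∑ l, christoffel g gL m b l x * pd f1 m x * V x l a
        = (∑ l, christoffel g gL m b l x * V x l a) * pd f1 m x := by
          rw [Finset.sum_mul]; apply Finset.sum_congr rfl; intro l _; ring
      _ = (∑ l, christoffel g gL m a l x * V x l b) * pd f1 m x := by rw [h]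
      _ = ∑ l, christoffel g gL m a l x * pd f1 m x * V x l b := by
          rw [Finset.sum_mul]; apply Finset.sum_congr rfl; intro l _; ring
  have hGV : G * V x = (V x)ᵀ * G := by
    calc G * V x = (G * V x)ᵀ := hGVsym.symm
      _ = (V x)ᵀ * Gᵀ := by rw [Matrix.transpose_mul]
      _ = (V x)ᵀ * G := by rw [hGsym]
  have hVH : (V x)ᵀ * H = H * V x := by
    have : (V x)ᵀ * (H - G) + (V x)ᵀ * G = (H - G) * V x + G * V x := by
      rw [← hHcV, ← hGV]
    calc (V x)ᵀ * H = (V x)ᵀ * (H - G) + (V x)ᵀ * G := by rw [← Matrix.mul_add, sub_add_cancel]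
      _ = (H - G) * V x + G * V x := this
      _ = H * V x := by rw [← Matrix.add_mul, sub_add_cancel]
  have hQH : (Q x)ᵀ * H = H * Q x := by
    rw [hQ x hx]
    rw [Matrix.transpose_sub, Matrix.transpose_smul, Matrix.transpose_smul,
      Matrix.transpose_one, Matrix.sub_mul, Matrix.mul_sub, Matrix.smul_mul, Matrix.smul_mul,
      Matrix.mul_smul, Matrix.mul_smul, one_mul, mul_one, hVH]
  obtain ⟨hQW1, hQW2⟩ := hQW x hx
  have hWQ : (W x)ᵀ * (Q x)ᵀ = 1 := by
    rw [← Matrix.transpose_mul, hQW1, Matrix.transpose_one]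
  have key : H * W x = (W x)ᵀ * H := by
    calc H * W x = ((W x)ᵀ * (Q x)ᵀ) * (H * W x) := by rw [hWQ, one_mul]
      _ = (W x)ᵀ * ((Q x)ᵀ * H) * W x := by rw [mul_assoc, mul_assoc, mul_assoc]
      _ = (W x)ᵀ * (H * Q x) * W x := by rw [hQH]
      _ = (W x)ᵀ * H * (Q x * W x) := by rw [mul_assoc, mul_assoc, mul_assoc]
      _ = (W x)ᵀ * H := by rw [hQW1, mul_one]
  have hHWsym : (H * W x)ᵀ = H * W x := by
    rw [Matrix.transpose_mul, hHsym, ← key]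
  have e1 : ∑ k, pd (pd f1 k) i x * W x k j = (H * W x) i j := by
    rw [Matrix.mul_apply]; rfl
  have e2 : ∑ k, pd (pd f1 k) j x * W x k i = (H * W x) j i := by
    rw [Matrix.mul_apply]; rfl
  rw [e1, e2]
  conv_lhs => rw [← hHWsym]
  rfl
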